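/- Let G be a unicycle graph whose unique cycle has odd length 2q+1 ≥ 5. Then Ψ(G) is a greedoid on V(G) if and only if for every S ∈ Ψ(G) the subgraph induced by N[S] is a König–Egerváry graph. -/

import Mathlib

open Finset

variable {V : Type*}

/-- A stable (independent) set of vertices. -/
def StableSet (G : SimpleGraph V) (S : Finset V) : Prop :=
  ∀ x ∈ S, ∀ y ∈ S, ¬ G.Adj x y

/-- The closed neighborhood N[S] of a finite vertex set. -/
def closedNbhd [Fintype V] [DecidableEq V] (G : SimpleGraph V) [DecidableRel G.Adj]
    (S : Finset V) : Finset V :=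
  S ∪ Finset.univ.filter (fun v => ∃ s ∈ S, G.Adj v s)

/-- Ψ(G): the family of local maximum stable sets of `G`:
stable sets `S` that are maximum stable sets of the subgraph induced by `N[S]`. -/
def Psi [Fintype V] [DecidableEq V] (G : SimpleGraph V) [DecidableRel G.Adj] :
    Set (Finset V) :=
  {S | StableSet G S ∧
    ∀ T : Finset V, T ⊆ closedNbhd G S → StableSet G T → T.card ≤ S.card}

/-- A maximum stable set of `G`. -/
def MaximumStable (G : SimpleGraph V) (S : Finset V) : Prop :=
  StableSet G S ∧ ∀ T : Finset V, StableSet G T → T.card ≤ S.card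

/-- The accessibility property of a set system. -/
def Accessible [DecidableEq V] (F : Set (Finset V)) : Prop :=
  ∀ X ∈ F, X.Nonempty → ∃ x ∈ X, X.erase x ∈ F

/-- The exchange property of a set system. -/
def ExchangeProp [DecidableEq V] (F : Set (Finset V)) : Prop :=
  ∀ X ∈ F, ∀ Y ∈ F, X.card = Y.card + 1 → ∃ x ∈ X, x ∉ Y ∧ insert x Y ∈ F

/-- A greedoid: a nonempty set system satisfying accessibility and exchange. -/
def IsGreedoid [DecidableEq V] (F : Set (Finset V)) : Prop :=
  F.Nonempty ∧ Accessible F ∧ ExchangeProp F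

/-- An accessibility chain for `S`: sets `f 1 ⊆ f 2 ⊆ ... ⊆ f |S| = S`,
with `|f j| = j` and each `f j ∈ Ψ(G)`. -/
def HasAccessChain [Fintype V] [DecidableEq V] (G : SimpleGraph V) [DecidableRel G.Adj]
    (S : Finset V) : Prop :=
  ∃ f : ℕ → Finset V, f S.card = S ∧
    (∀ j, 1 ≤ j → j ≤ S.card → (f j).card = j ∧ f j ∈ Psi G) ∧
    (∀ j, 1 ≤ j → j < S.card → f j ⊆ f (j + 1))

/-- A matching `M` is uniquely restricted if it is the unique perfect matching of the
subgraph induced by the set of vertices it saturates. -/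
def UniquelyRestricted (G : SimpleGraph V) (M : G.Subgraph) : Prop :=
  M.IsMatching ∧ ∀ M' : G.Subgraph, M'.IsMatching → M'.support = M.support →
    M'.edgeSet = M.edgeSet

/-- A maximum matching: a matching of maximum cardinality. -/
def MaximumMatching (G : SimpleGraph V) (M : G.Subgraph) : Prop :=
  M.IsMatching ∧ ∀ M' : G.Subgraph, M'.IsMatching → M'.edgeSet.ncard ≤ M.edgeSet.ncard

/-- A cycle `c` is alternating with respect to the matching `M` if of any two incident
edges of `c` exactly one belongs to `M`. -/
def AlternatingCycle (G : SimpleGraph V) (M : G.Subgraph) {v : V} (c : G.Walk v v) : Prop :=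
  c.IsCycle ∧ ∀ i : Fin c.edges.length,
    (c.edges.get i ∈ M.edgeSet ↔
      c.edges.get ⟨(i.1 + 1) % c.edges.length,
        Nat.mod_lt _ (lt_of_le_of_lt (Nat.zero_le _) i.2)⟩ ∉ M.edgeSet)

/-- A unicyclic graph: it has a cycle, and all of its cycles have the same edge set. -/
def Unicyclic [DecidableEq V] (G : SimpleGraph V) : Prop :=
  (∃ (v : V) (c : G.Walk v v), c.IsCycle) ∧
  ∀ ⦃v : V⦄ (c : G.Walk v v) ⦃w : V⦄ (d : G.Walk w w), c.IsCycle → d.IsCycle →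
    c.edges.toFinset = d.edges.toFinset

/-- The stability number α(G). -/
noncomputable def alphaNum (G : SimpleGraph V) : ℕ :=
  sSup {n | ∃ S : Finset V, StableSet G S ∧ S.card = n}

/-- The matching number μ(G). -/
noncomputable def muNum (G : SimpleGraph V) : ℕ :=
  sSup {n | ∃ M : G.Subgraph, M.IsMatching ∧ M.edgeSet.ncard = n}

/-- A König–Egerváry graph: α(G) + μ(G) = |V(G)|. -/
def KonigEgervary (G : SimpleGraph V) [Fintype V] : Prop :=
  alphaNum G + muNum G = Fintype.card V

/-!
For `S ∈ Ψ(G)` the set `S` is a maximum stable set of `H = G[N[S]]`, so `α(H) = |S|`, and a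
matching of `H` has at most `|N(S)|` edges, with equality exactly when `N(S)` can be matched
into `S`. Hence `H` is König–Egerváry iff `N(S)` can be matched into `S`.

If `Ψ(G)` is accessible, every `S ∈ Ψ(G)` is built up one vertex at a time inside `Ψ(G)`; a new
vertex `x` has at most one neighbour outside `N[S - x]`, since two such neighbours are
non-adjacent (no triangles) and would enlarge a stable subset of `N[S]`, so the matching extends.

Conversely, given these matchings, accessibility and exchange can only fail if from every
vertex of some set one can continue an alternating walk (matching edge, then another edge)
without immediately turning back. Such a walk in a finite graph closes into a cycle that
alternates between two disjoint sets, hence an even cycle, and all cycles of `G` are odd.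
-/

open SimpleGraph

namespace SimpleGraph

variable (G : SimpleGraph V)

lemma exists_walk_support_eq_map_range (w : ℕ → V) (hadj : ∀ i, G.Adj (w i) (w (i + 1)))
    (n : ℕ) : ∃ p : G.Walk (w 0) (w n), p.support = (List.range (n + 1)).map w := by
  induction n with
  | zero => exact ⟨.nil, rfl⟩
  | succ n ih =>
    obtain ⟨p, hp⟩ := ih
    exact ⟨p.concat (hadj n), by rw [Walk.support_concat, hp, List.range_succ (n := n + 1)]; simp⟩

lemma exists_isCycle_of_nonbacktracking [Finite V] (w : ℕ → V)
    (hadj : ∀ i, G.Adj (w i) (w (i + 1))) (hback : ∀ i, w (i + 2) ≠ w i) :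
    ∃ i n, w (i + n) = w i ∧ ∃ c : G.Walk (w i) (w i), c.IsCycle ∧ c.length = n := by
  classical
  have hrep : ∃ j, ∃ i < j, w i = w j := by
    obtain ⟨a, b, hab, h⟩ := Finite.exists_ne_map_eq_of_infinite w
    rcases hab.lt_or_gt with hab | hab
    exacts [⟨b, a, hab, h⟩, ⟨a, b, hab, h.symm⟩]
  obtain ⟨j, ⟨i, hij, hwij⟩, hmin⟩ : ∃ j, (∃ i < j, w i = w j) ∧ ∀ m < j, ¬ ∃ i < m, w i = w m :=
    ⟨_, Nat.find_spec hrep, fun m => Nat.find_min hrep⟩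
  obtain ⟨n, rfl⟩ := Nat.exists_eq_add_of_lt hij
  have hinj : ∀ a ∈ List.range (n + 1), ∀ b ∈ List.range (n + 1),
      w (i + a) = w (i + b) → a = b := by
    intro a ha b hb hab
    rw [List.mem_range] at ha hb
    by_contra hne
    rcases Nat.lt_or_gt_of_ne hne with h | h
    · exact hmin (i + b) (by omega) ⟨_, by omega, hab⟩
    · exact hmin (i + a) (by omega) ⟨_, by omega, hab.symm⟩
  have hn : 2 ≤ n := by
    by_contra! h
    interval_cases n
    · exact (hadj i).ne hwij
    · exact hback i hwij.symm
  obtain ⟨p, hp⟩ :=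
    exists_walk_support_eq_map_range G (fun k => w (i + k)) (fun k => hadj _) (n + 1)
  set c : G.Walk (w i) (w i) := p.copy rfl hwij.symm
  have hc : c.support = (List.range (n + 2)).map fun k => w (i + k) := by
    rw [Walk.support_copy, hp]
  have hlen : c.length = n + 1 := by
    simpa [Walk.length_support] using congrArg List.length hc
  refine ⟨i, n + 1, hwij.symm, c, ?_, hlen⟩
  -- the reversed cycle has `w i, …, w (i + n)` as the tail of its support
  rw [← Walk.isCycle_reverse, Walk.isCycle_iff_isPath_tail_and_le_length, Walk.isPath_def,
    Walk.support_tail_of_not_nil _ (by simp [← Walk.length_eq_zero_iff, hlen]),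
    Walk.support_reverse, List.tail_reverse, List.nodup_reverse, hc, List.range_succ,
    List.map_append, List.map_singleton, List.dropLast_concat, Walk.length_reverse, hlen]
  exact ⟨(List.nodup_range).map_on hinj, by omega⟩

lemma exists_even_isCycle_of_alternating [Finite V] (w : ℕ → V) (A : Set V)
    (hadj : ∀ i, G.Adj (w i) (w (i + 1))) (hback : ∀ i, w (i + 2) ≠ w i)
    (halt : ∀ i, w (i + 1) ∈ A ↔ w i ∉ A) :
    ∃ (v : V) (c : G.Walk v v), c.IsCycle ∧ Even c.length := by
  obtain ⟨i, n, hrep, c, hc, rfl⟩ := exists_isCycle_of_nonbacktracking G w hadj hback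
  have hparity : ∀ n, (w (i + n) ∈ A ↔ w i ∈ A) ↔ Even n := by
    intro n
    induction n with
    | zero => simp
    | succ n ih => rw [← add_assoc, halt, Nat.even_add_one, ← ih]; tauto
  exact ⟨_, c, hc, (hparity _).1 (by rw [hrep])⟩

lemma exists_even_isCycle_of_injOn [Finite V] (A : Set V) (hA : A.Nonempty) (β : V → V)
    (hβ : Set.InjOn β A) (hβA : ∀ a ∈ A, β a ∉ A) (hadj : ∀ a ∈ A, G.Adj a (β a))
    (hstep : ∀ a ∈ A, ∃ a' ∈ A, a' ≠ a ∧ G.Adj (β a) a') :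
    ∃ (v : V) (c : G.Walk v v), c.IsCycle ∧ Even c.length := by
  choose! σ hσA hσne hσadj using hstep
  obtain ⟨a₀, ha₀⟩ := hA
  set a : ℕ → V := fun k => σ^[k] a₀
  have ha : ∀ k, a k ∈ A := fun k => Set.MapsTo.iterate hσA k ha₀
  have hsucc : ∀ k, a (k + 1) = σ (a k) := fun k => Function.iterate_succ_apply' σ k a₀
  -- the walk `a 0, β (a 0), a 1, β (a 1), …`
  set w : ℕ → V := fun i => if Even i then a (i / 2) else β (a (i / 2))
  have hw_even : ∀ k, w (2 * k) = a k := fun k => by simp [w]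
  have hw_odd : ∀ k, w (2 * k + 1) = β (a k) := fun k => by
    simp [w, Nat.add_div_of_dvd_right]
  apply exists_even_isCycle_of_alternating G w A
  · intro i
    obtain ⟨k, rfl | rfl⟩ := Nat.even_or_odd' i
    · rw [hw_even, hw_odd]
      exact hadj _ (ha k)
    · rw [hw_odd, show 2 * k + 1 + 1 = 2 * (k + 1) by ring, hw_even, hsucc]
      exact hσadj _ (ha k)
  · intro i
    obtain ⟨k, rfl | rfl⟩ := Nat.even_or_odd' i
    · rw [show 2 * k + 2 = 2 * (k + 1) by ring, hw_even, hw_even, hsucc]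
      exact hσne _ (ha k)
    · rw [show 2 * k + 1 + 2 = 2 * (k + 1) + 1 by ring, hw_odd, hw_odd, hsucc]
      exact fun h => hσne _ (ha k) (hβ (hσA _ (ha k)) (ha k) h)
  · intro i
    obtain ⟨k, rfl | rfl⟩ := Nat.even_or_odd' i
    · rw [hw_even, hw_odd]
      exact iff_of_false (hβA _ (ha k)) (not_not.2 (ha k))
    · rw [show 2 * k + 1 + 1 = 2 * (k + 1) by ring, hw_even, hw_odd]
      exact iff_of_true (ha _) (hβA _ (ha k))

end SimpleGraph

section ClosedNbhd

lemma StableSet.mono {G : SimpleGraph V} {S T : Finset V} (hS : StableSet G S) (h : T ⊆ S) :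
    StableSet G T :=
  fun x hx y hy => hS x (h hx) y (h hy)

variable [Fintype V] [DecidableEq V] (G : SimpleGraph V) [DecidableRel G.Adj]

lemma mem_closedNbhd {S : Finset V} {v : V} :
    v ∈ closedNbhd G S ↔ v ∈ S ∨ ∃ s ∈ S, G.Adj v s := by
  simp [closedNbhd]

lemma subset_closedNbhd (S : Finset V) : S ⊆ closedNbhd G S :=
  subset_union_left

lemma mem_closedNbhd_of_adj {S : Finset V} {v s : V} (hs : s ∈ S) (h : G.Adj v s) :
    v ∈ closedNbhd G S :=
  (mem_closedNbhd G).2 (Or.inr ⟨s, hs, h⟩)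

lemma closedNbhd_empty : closedNbhd G ∅ = ∅ := by
  simp [closedNbhd]

lemma mem_closedNbhd_insert {S : Finset V} {v x : V} :
    v ∈ closedNbhd G (insert x S) ↔ v = x ∨ G.Adj v x ∨ v ∈ closedNbhd G S := by
  simp only [mem_closedNbhd, mem_insert, exists_eq_or_imp]
  tauto

lemma mem_closedNbhd_sdiff {S : Finset V} (hS : StableSet G S) {v : V} :
    v ∈ closedNbhd G S \ S ↔ ∃ s ∈ S, G.Adj v s := by
  rw [mem_sdiff, mem_closedNbhd]
  constructor
  · rintro ⟨h | h, hv⟩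
    exacts [absurd h hv, h]
  · rintro ⟨s, hs, h⟩
    exact ⟨Or.inr ⟨s, hs, h⟩, fun hv => hS v hv s hs h⟩

variable {G}

lemma StableSet.insert {S : Finset V} {x : V} (hS : StableSet G S)
    (hx : x ∉ closedNbhd G S) : StableSet G (insert x S) := by
  have hxS : ∀ s ∈ S, ¬ G.Adj x s := fun s hs h => hx (mem_closedNbhd_of_adj G hs h)
  intro a ha b hb
  rw [mem_insert] at ha hb
  rcases ha with rfl | ha <;> rcases hb with rfl | hb
  · exact G.irrefl
  · exact hxS b hb
  · exact fun h => hxS a ha h.symm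
  · exact hS a ha b hb

end ClosedNbhd

/-- A matching of `D` into `A`, recorded by the partner map `f`. -/
structure IsMatchingInto (G : SimpleGraph V) (f : V → V) (D A : Finset V) : Prop where
  injOn : Set.InjOn f D
  mem : ∀ u ∈ D, f u ∈ A
  adj : ∀ u ∈ D, G.Adj u (f u)

namespace IsMatchingInto

variable {G : SimpleGraph V} {f : V → V} {D A : Finset V}

lemma of_empty : IsMatchingInto G f ∅ A :=
  ⟨by simp, by simp, by simp⟩

lemma card_le [DecidableEq V] (hf : IsMatchingInto G f D A) {T : Finset V} (hT : T ⊆ A ∪ D)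
    (hTs : StableSet G T) : T.card ≤ A.card := by
  have hD : ∀ t ∈ T, t ∉ A → t ∈ D := fun t ht htA => (mem_union.1 (hT ht)).resolve_left htA
  refine card_le_card_of_injOn (fun t => if t ∈ A then t else f t) ?_ ?_
  · intro t ht
    by_cases htA : t ∈ A
    · simp [htA]
    · simpa [htA] using hf.mem t (hD t ht htA)
  · -- a vertex of `T ∩ A` is never the partner of one of `T \ A`, as `T` is stable
    intro a ha b hb hab
    simp only at hab
    split_ifs at hab with haA hbA hbA
    · exact hab
    · exact absurd (hab ▸ hf.adj b (hD b hb hbA)) (hTs b hb a ha)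
    · exact absurd (hab ▸ hf.adj a (hD a ha haA)) (hTs a ha b hb)
    · exact hf.injOn (hD a ha haA) (hD b hb hbA) hab

lemma exists_isMatching (hf : IsMatchingInto G f D A) (hDA : Disjoint D A) :
    ∃ M : G.Subgraph, M.IsMatching ∧ M.edgeSet.ncard = D.card := by
  have hne : ∀ u ∈ D, ∀ v ∈ D, u ≠ f v := fun u hu v hv h =>
    disjoint_left.1 hDA hu (h ▸ hf.mem v hv)
  refine ⟨⨆ u : D, G.subgraphOfAdj (hf.adj u u.2),
    Subgraph.IsMatching.iSup (fun u => .subgraphOfAdj _) fun u v huv => ?_, ?_⟩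
  · have huv' : (u : V) ≠ v := fun h => huv (Subtype.ext h)
    have hfuv : f u ≠ f v := fun h => huv' (hf.injOn u.2 v.2 h)
    simp only [support_subgraphOfAdj, Set.disjoint_insert_left,
      Set.disjoint_singleton_left, Set.mem_insert_iff, Set.mem_singleton_iff]
    exact ⟨by simp [huv', hne u u.2 v v.2], by simp [(hne v v.2 u u.2).symm, hfuv]⟩
  · have hinj : Function.Injective fun u : D => s((u : V), f u) := by
      intro u v huv
      rcases Sym2.eq_iff.1 huv with ⟨h, -⟩ | ⟨h, -⟩
      exacts [Subtype.ext h, absurd h (hne u u.2 v v.2)]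
    simp only [Subgraph.edgeSet_iSup, edgeSet_subgraphOfAdj,
      Set.iUnion_singleton_eq_range, Set.ncard_range_of_injective hinj, Nat.card_eq_fintype_card,
      Fintype.card_coe]

section

variable [Fintype V] [DecidableEq V] [DecidableRel G.Adj]

lemma erase {X : Finset V} {x : V} (hX : StableSet G X)
    (hf : IsMatchingInto G f (closedNbhd G X \ X) X)
    (hsole : ∀ u ∈ closedNbhd G X \ X, f u = x → ∀ y ∈ X, G.Adj u y → y = x) :
    IsMatchingInto G f (closedNbhd G (X.erase x) \ X.erase x) (X.erase x) := by
  have hX' : StableSet G (X.erase x) := hX.mono (erase_subset x X)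
  have hsub : closedNbhd G (X.erase x) \ X.erase x ⊆ closedNbhd G X \ X := fun t ht => by
    obtain ⟨y, hy, hty⟩ := (mem_closedNbhd_sdiff G hX').1 ht
    exact (mem_closedNbhd_sdiff G hX).2 ⟨y, mem_of_mem_erase hy, hty⟩
  refine ⟨hf.injOn.mono (by exact_mod_cast hsub), fun t ht => ?_, fun t ht => hf.adj t (hsub ht)⟩
  obtain ⟨y, hy, hty⟩ := (mem_closedNbhd_sdiff G hX').1 ht
  refine mem_erase.2 ⟨fun hfx => ?_, hf.mem t (hsub ht)⟩
  exact (mem_erase.1 hy).1 (hsole t (hsub ht) hfx y (mem_of_mem_erase hy) hty)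

lemma exists_insert {Y : Finset V} {x : V}
    (hf : IsMatchingInto G f (closedNbhd G Y \ Y) Y) (hx : x ∉ closedNbhd G Y)
    (hsub : (G.neighborSet x \ ↑(closedNbhd G Y)).Subsingleton) :
    ∃ g, IsMatchingInto G g (closedNbhd G (insert x Y) \ insert x Y) (insert x Y) := by
  set g : V → V := fun u => if u ∈ closedNbhd G Y then f u else x
  have hg : ∀ u ∈ closedNbhd G (insert x Y) \ insert x Y,
      (u ∈ closedNbhd G Y \ Y ∧ g u = f u) ∨
        (u ∈ G.neighborSet x \ ↑(closedNbhd G Y) ∧ g u = x) := by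
    intro u hu
    rw [mem_sdiff, mem_closedNbhd_insert, mem_insert, not_or] at hu
    obtain ⟨hu | hu | hu, hux, huY⟩ := hu
    · exact absurd hu hux
    · by_cases huN : u ∈ closedNbhd G Y
      · exact Or.inl ⟨mem_sdiff.2 ⟨huN, huY⟩, if_pos huN⟩
      · exact Or.inr ⟨⟨hu.symm, huN⟩, if_neg huN⟩
    · exact Or.inl ⟨mem_sdiff.2 ⟨hu, huY⟩, if_pos hu⟩
  refine ⟨g, ⟨?_, fun u hu => ?_, fun u hu => ?_⟩⟩
  · intro a ha b hb hab
    have hfx : ∀ u ∈ closedNbhd G Y \ Y, f u ≠ x :=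
      fun u hu hux => hx (hux ▸ subset_closedNbhd G Y (hf.mem u hu))
    rcases hg a ha with ⟨ha', hga⟩ | ⟨ha', hga⟩ <;> rcases hg b hb with ⟨hb', hgb⟩ | ⟨hb', hgb⟩
    · exact hf.injOn ha' hb' (by rw [← hga, ← hgb]; exact hab)
    · exact absurd (hga ▸ hgb ▸ hab) (hfx a ha')
    · exact absurd (hgb ▸ hga ▸ hab.symm) (hfx b hb')
    · exact hsub ha' hb'
  · rcases hg u hu with ⟨hu', hgu⟩ | ⟨-, hgu⟩
    · exact hgu ▸ mem_insert_of_mem (hf.mem u hu')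
    · exact hgu ▸ mem_insert_self x Y
  · rcases hg u hu with ⟨hu', hgu⟩ | ⟨hu', hgu⟩
    · exact hgu ▸ hf.adj u hu'
    · exact hgu ▸ hu'.1.symm

/-- Otherwise `fY ∘ fX` would map the vertices `v ∈ N(X)` with `fX v ∈ N(Y)` injectively into
those lying in `Y`, a proper subset as it misses `u`. -/
lemma apply_notMem_closedNbhd {X Y : Finset V} {fX fY : V → V}
    (hX : StableSet G X) (hY : StableSet G Y)
    (hfX : IsMatchingInto G fX (closedNbhd G X \ X) X)
    (hfY : IsMatchingInto G fY (closedNbhd G Y \ Y) Y)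
    {u : V} (hu : u ∈ closedNbhd G X \ X) (huY : u ∉ closedNbhd G Y) :
    fX u ∉ closedNbhd G Y := by
  intro hfu
  set T := (closedNbhd G X \ X).filter (fun v => fX v ∈ closedNbhd G Y \ Y)
  have hmaps : ∀ v ∈ T, fY (fX v) ∈ T.filter (· ∈ Y) := by
    intro v hv
    obtain ⟨hvX, hvY⟩ := mem_filter.1 hv
    have hgY : fY (fX v) ∈ Y := hfY.mem _ hvY
    have hgX : fY (fX v) ∈ closedNbhd G X \ X :=
      (mem_closedNbhd_sdiff G hX).2 ⟨fX v, hfX.mem v hvX, (hfY.adj _ hvY).symm⟩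
    refine mem_filter.2 ⟨mem_filter.2 ⟨hgX, ?_⟩, hgY⟩
    exact (mem_closedNbhd_sdiff G hY).2 ⟨_, hgY, (hfX.adj _ hgX).symm⟩
  have hinj : Set.InjOn (fY ∘ fX) T := fun a ha b hb hab =>
    hfX.injOn (mem_filter.1 ha).1 (mem_filter.1 hb).1
      (hfY.injOn (mem_filter.1 ha).2 (mem_filter.1 hb).2 hab)
  have huT : u ∈ T := by
    refine mem_filter.2 ⟨hu, mem_sdiff.2 ⟨hfu, fun h => huY ?_⟩⟩
    exact mem_closedNbhd_of_adj G h (hfX.adj u hu)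
  have hlt : (T.filter (· ∈ Y)).card < T.card :=
    card_lt_card (filter_ssubset.2 ⟨u, huT, fun h => huY (subset_closedNbhd G Y h)⟩)
  exact (card_le_card_of_injOn _ hmaps hinj).not_gt hlt

end

end IsMatchingInto

namespace SimpleGraph.Subgraph.IsMatching

variable {G : SimpleGraph V} {M : G.Subgraph}

lemma eq_of_mem_edgeSet (hM : M.IsMatching) {e e' : Sym2 V} {w : V}
    (he : e ∈ M.edgeSet) (he' : e' ∈ M.edgeSet) (hw : w ∈ e) (hw' : w ∈ e') : e = e' := by
  have h : M.Adj w (Sym2.Mem.other hw) := by rwa [← Subgraph.mem_edgeSet, Sym2.other_spec]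
  have h' : M.Adj w (Sym2.Mem.other hw') := by rwa [← Subgraph.mem_edgeSet, Sym2.other_spec]
  rw [← Sym2.other_spec hw, ← Sym2.other_spec hw', hM.eq_of_adj_left h h']

lemma exists_injOn_edgeSet (hM : M.IsMatching) {A : Finset V} (hA : StableSet G A) :
    ∃ φ : Sym2 V → V, Set.InjOn φ M.edgeSet ∧ ∀ e ∈ M.edgeSet, φ e ∈ e ∧ φ e ∉ A := by
  classical
  set φ : Sym2 V → V := fun e => if e.out.1 ∈ A then e.out.2 else e.out.1
  have hφe : ∀ e, φ e ∈ e := fun e => by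
    by_cases h : e.out.1 ∈ A <;> simp [φ, h, Sym2.out_fst_mem, Sym2.out_snd_mem]
  have hφA : ∀ e ∈ M.edgeSet, φ e ∉ A := by
    intro e he
    have hadj : G.Adj e.out.1 e.out.2 :=
      M.adj_sub (by rw [← Subgraph.mem_edgeSet]; convert he; exact Quot.out_eq e)
    by_cases h : e.out.1 ∈ A
    · simpa [φ, h] using fun h' => hA _ h _ h' hadj
    · simp [φ, h]
  exact ⟨φ, fun e he e' he' h => hM.eq_of_mem_edgeSet he he' (hφe e) (h ▸ hφe e'),
    fun e he => ⟨hφe e, hφA e he⟩⟩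

variable [Fintype V] [DecidableEq V]

lemma ncard_edgeSet_add_card_le (hM : M.IsMatching) {A : Finset V} (hA : StableSet G A) :
    M.edgeSet.ncard + A.card ≤ Fintype.card V := by
  obtain ⟨φ, hφ, hφA⟩ := hM.exists_injOn_edgeSet hA
  have := Set.ncard_le_ncard_of_injOn φ (t := ↑Aᶜ) (fun e he => by simpa using (hφA e he).2) hφ
  rw [Set.ncard_coe_finset, card_compl] at this
  have := card_le_univ A
  omega

lemma exists_isMatchingInto (hM : M.IsMatching) {A : Finset V} (hA : StableSet G A)
    (hcard : M.edgeSet.ncard + A.card = Fintype.card V) : ∃ f, IsMatchingInto G f Aᶜ A := by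
  obtain ⟨φ, hφ, hφA⟩ := hM.exists_injOn_edgeSet hA
  have himage : φ '' M.edgeSet = ↑Aᶜ := by
    refine Set.eq_of_subset_of_ncard_le ?_ ?_ (Set.toFinite _)
    · rintro _ ⟨e, he, rfl⟩
      simpa using (hφA e he).2
    · rw [hφ.ncard_image, Set.ncard_coe_finset, card_compl]
      omega
  have hpartner : ∀ w ∉ A, ∃ z ∈ A, M.Adj w z := by
    intro w hw
    obtain ⟨e, he, rfl⟩ : w ∈ φ '' M.edgeSet := by simpa [himage] using hw
    have hadj : M.Adj (φ e) (Sym2.Mem.other (hφA e he).1) := by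
      rwa [← Subgraph.mem_edgeSet, Sym2.other_spec]
    refine ⟨_, by_contra fun hz => ?_, hadj⟩
    -- the partner `z` would itself be `φ e'` for an edge `e' ∋ z`, forcing `e' = e` and `z = φ e`
    obtain ⟨e', he', hze'⟩ : Sym2.Mem.other (hφA e he).1 ∈ φ '' M.edgeSet := by
      simpa [himage] using hz
    have hee' : e' = e := hM.eq_of_mem_edgeSet he' he (hze' ▸ (hφA e' he').1) (Sym2.other_mem _)
    exact hadj.ne (by rw [← hze', hee'])
  choose! f hfA hfadj using hpartner
  exact ⟨f, fun a ha b hb hab => hM.eq_of_adj_right (hfadj a (by simpa using ha))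
      (hab ▸ hfadj b (by simpa using hb)),
    fun u hu => hfA u (by simpa using hu), fun u hu => M.adj_sub (hfadj u (by simpa using hu))⟩

end SimpleGraph.Subgraph.IsMatching

section KonigEgervary

variable (G : SimpleGraph V)

lemma alphaNum_eq_card {A : Finset V} (hA : MaximumStable G A) : alphaNum G = A.card :=
  IsGreatest.csSup_eq ⟨⟨A, hA.1, rfl⟩, by rintro _ ⟨T, hT, rfl⟩; exact hA.2 T hT⟩

variable [Fintype V] [DecidableEq V]

lemma bddAbove_ncard_isMatching :
    BddAbove {n | ∃ M : G.Subgraph, M.IsMatching ∧ M.edgeSet.ncard = n} := by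
  refine ⟨Fintype.card V, ?_⟩
  rintro _ ⟨M, hM, rfl⟩
  simpa using hM.ncard_edgeSet_add_card_le (A := ∅) (by simp [StableSet])

lemma exists_isMatching_ncard_eq_muNum :
    ∃ M : G.Subgraph, M.IsMatching ∧ M.edgeSet.ncard = muNum G :=
  Nat.sSup_mem (s := {n | ∃ M : G.Subgraph, M.IsMatching ∧ M.edgeSet.ncard = n})
    ⟨0, ⊥, fun _ h => h.elim, by simp⟩ (bddAbove_ncard_isMatching G)

theorem konigEgervary_iff_exists_isMatchingInto {A : Finset V} (hA : MaximumStable G A) :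
    KonigEgervary G ↔ ∃ f, IsMatchingInto G f Aᶜ A := by
  rw [KonigEgervary, alphaNum_eq_card G hA]
  obtain ⟨M₀, hM₀, hM₀μ⟩ := exists_isMatching_ncard_eq_muNum G
  constructor
  · intro h
    exact hM₀.exists_isMatchingInto hA.1 (by rw [hM₀μ]; exact (add_comm _ _).trans h)
  · rintro ⟨f, hf⟩
    obtain ⟨M, hM, hMcard⟩ := hf.exists_isMatching disjoint_compl_left
    have hμ : M.edgeSet.ncard ≤ muNum G := le_csSup (bddAbove_ncard_isMatching G) ⟨M, hM, rfl⟩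
    have := hM₀.ncard_edgeSet_add_card_le hA.1
    have := card_le_univ A
    rw [card_compl] at hMcard
    omega

end KonigEgervary

section Induce

variable [DecidableEq V] (G : SimpleGraph V) {s S : Finset V}

lemma maximumStable_induce_subtype (hSs : S ⊆ s) (hS : StableSet G S)
    (hmax : ∀ T ⊆ s, StableSet G T → T.card ≤ S.card) :
    MaximumStable (G.induce ↑s) (S.subtype (· ∈ (s : Set V))) := by
  refine ⟨fun a ha b hb => by simpa using hS a (mem_subtype.1 ha) b (mem_subtype.1 hb), ?_⟩
  intro T hT
  have hTG : StableSet G (T.map (Function.Embedding.subtype _)) := by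
    intro a ha b hb
    simp only [mem_map, Function.Embedding.coe_subtype] at ha hb
    obtain ⟨a, ha, rfl⟩ := ha
    obtain ⟨b, hb, rfl⟩ := hb
    exact hT a ha b hb
  have := hmax _ (fun v hv => by obtain ⟨a, -, rfl⟩ := mem_map.1 hv; exact a.2) hTG
  rwa [card_map, ← filter_true_of_mem fun v hv => hSs hv, ← card_subtype] at this

lemma exists_isMatchingInto_induce_subtype_iff (hSs : S ⊆ s) :
    (∃ F, IsMatchingInto (G.induce ↑s) F (S.subtype (· ∈ (s : Set V)))ᶜ
      (S.subtype (· ∈ (s : Set V)))) ↔ ∃ f, IsMatchingInto G f (s \ S) S := by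
  have hcompl : ∀ a : (s : Set V), a ∈ (S.subtype (· ∈ (s : Set V)))ᶜ ↔ (a : V) ∈ s \ S := by
    intro a
    simp [mem_sdiff]
  constructor
  · rintro ⟨F, hF⟩
    refine ⟨fun v => if h : v ∈ s then F ⟨v, h⟩ else v, ⟨?_, fun u hu => ?_, fun u hu => ?_⟩⟩
    · intro a ha b hb hab
      have ha' := (hcompl ⟨a, (mem_sdiff.1 ha).1⟩).2 ha
      have hb' := (hcompl ⟨b, (mem_sdiff.1 hb).1⟩).2 hb
      simp only [dif_pos (mem_sdiff.1 ha).1, dif_pos (mem_sdiff.1 hb).1] at hab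
      exact congrArg Subtype.val (hF.injOn ha' hb' (Subtype.ext hab))
    · have hu' := (hcompl ⟨u, (mem_sdiff.1 hu).1⟩).2 hu
      simpa [dif_pos (mem_sdiff.1 hu).1] using hF.mem _ hu'
    · have hu' := (hcompl ⟨u, (mem_sdiff.1 hu).1⟩).2 hu
      simpa [dif_pos (mem_sdiff.1 hu).1] using hF.adj _ hu'
  · rintro ⟨f, hf⟩
    have hfs : ∀ a : (s : Set V), a ∈ (S.subtype (· ∈ (s : Set V)))ᶜ → f a ∈ s :=
      fun a ha => hSs (hf.mem _ ((hcompl a).1 ha))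
    refine ⟨fun a => if h : f a ∈ s then ⟨f a, h⟩ else a, ⟨?_, fun a ha => ?_, fun a ha => ?_⟩⟩
    · intro a ha b hb hab
      simp only [dif_pos (hfs a ha), dif_pos (hfs b hb), Subtype.mk.injEq] at hab
      exact Subtype.ext (hf.injOn ((hcompl a).1 ha) ((hcompl b).1 hb) hab)
    · simpa [dif_pos (hfs a ha)] using hf.mem _ ((hcompl a).1 ha)
    · simpa [dif_pos (hfs a ha)] using hf.adj _ ((hcompl a).1 ha)

end Induce

theorem konigEgervary_induce_closedNbhd_iff [Fintype V] [DecidableEq V] (G : SimpleGraph V)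
    [DecidableRel G.Adj] {S : Finset V} (hS : S ∈ Psi G) :
    KonigEgervary (G.induce ↑(closedNbhd G S)) ↔
      ∃ f, IsMatchingInto G f (closedNbhd G S \ S) S := by
  rw [konigEgervary_iff_exists_isMatchingInto _
      (maximumStable_induce_subtype G (subset_closedNbhd G S) hS.1 hS.2),
    exists_isMatchingInto_induce_subtype_iff G (subset_closedNbhd G S)]

section Psi

variable [Fintype V] [DecidableEq V] (G : SimpleGraph V) [DecidableRel G.Adj]

lemma mem_psi_of_isMatchingInto {S : Finset V} {f : V → V} (hS : StableSet G S)
    (hf : IsMatchingInto G f (closedNbhd G S \ S) S) : S ∈ Psi G :=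
  ⟨hS, fun _ hT hTs => hf.card_le (by rwa [union_sdiff_of_subset (subset_closedNbhd G S)]) hTs⟩

lemma empty_mem_psi : (∅ : Finset V) ∈ Psi G :=
  mem_psi_of_isMatchingInto G (f := id) (by simp [StableSet])
    (by simpa [closedNbhd_empty] using IsMatchingInto.of_empty)

theorem accessible_psi (hodd : ∀ ⦃v : V⦄ (c : G.Walk v v), c.IsCycle → ¬ Even c.length)
    (hmatch : ∀ S ∈ Psi G, ∃ f, IsMatchingInto G f (closedNbhd G S \ S) S) :
    Accessible (Psi G) := by
  intro X hX hXne
  obtain ⟨f, hf⟩ := hmatch X hX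
  suffices ∃ x ∈ X, ∀ u ∈ closedNbhd G X \ X, f u = x → ∀ y ∈ X, G.Adj u y → y = x by
    obtain ⟨x, hx, hsole⟩ := this
    exact ⟨x, hx, mem_psi_of_isMatchingInto G (hX.1.mono (erase_subset x X)) (hf.erase hX.1 hsole)⟩
  by_contra! hbad
  choose! β hβD hfβ hstep using hbad
  obtain ⟨v, c, hc, heven⟩ := exists_even_isCycle_of_injOn G X hXne β
    (fun a ha b hb hab => by rw [← hfβ a ha, ← hfβ b hb, hab])
    (fun a ha haX => (mem_sdiff.1 (hβD a ha)).2 haX)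
    (fun a ha => by simpa only [hfβ a ha] using (hf.adj _ (hβD a ha)).symm)
    (fun a ha => by
      obtain ⟨y, hy, hadj, hne⟩ := hstep a ha
      exact ⟨y, hy, hne, hadj⟩)
  exact hodd c hc heven

/-- `fX` maps `N(X) \ N[Y]` into `X \ N[Y]`; if every vertex there had two neighbours outside
`N[Y]`, alternating walks through `N(X) \ N[Y]` would never stop and close into an even cycle. -/
lemma exists_neighborSet_sdiff_closedNbhd_subsingleton
    (hodd : ∀ ⦃v : V⦄ (c : G.Walk v v), c.IsCycle → ¬ Even c.length)
    {X Y : Finset V} {fX fY : V → V} (hX : StableSet G X) (hY : StableSet G Y)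
    (hfX : IsMatchingInto G fX (closedNbhd G X \ X) X)
    (hfY : IsMatchingInto G fY (closedNbhd G Y \ Y) Y) (hC : (X \ closedNbhd G Y).Nonempty) :
    ∃ x ∈ X \ closedNbhd G Y, (G.neighborSet x \ ↑(closedNbhd G Y)).Subsingleton := by
  by_contra! hbad
  set A := (closedNbhd G X \ X) \ closedNbhd G Y
  have hA : ∀ x ∈ X \ closedNbhd G Y, ∀ u ∈ G.neighborSet x \ ↑(closedNbhd G Y), u ∈ A :=
    fun x hx u hu =>
      mem_sdiff.2 ⟨(mem_closedNbhd_sdiff G hX).2 ⟨x, (mem_sdiff.1 hx).1, hu.1.symm⟩, hu.2⟩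
  obtain ⟨x₀, hx₀⟩ := hC
  obtain ⟨u₀, hu₀⟩ := (hbad x₀ hx₀).nonempty
  obtain ⟨v, c, hc, heven⟩ := exists_even_isCycle_of_injOn G A ⟨u₀, hA x₀ hx₀ u₀ hu₀⟩
    fX (hfX.injOn.mono (coe_subset.2 sdiff_subset))
    (fun a ha haA => (mem_sdiff.1 (mem_sdiff.1 haA).1).2 (hfX.mem a (mem_sdiff.1 ha).1))
    (fun a ha => hfX.adj a (mem_sdiff.1 ha).1)
    (fun a ha => by
      obtain ⟨haX, haY⟩ := mem_sdiff.1 ha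
      have hfa : fX a ∈ X \ closedNbhd G Y :=
        mem_sdiff.2 ⟨hfX.mem a haX, hfX.apply_notMem_closedNbhd hX hY hfY haX haY⟩
      obtain ⟨a', ha', hne⟩ := (hbad _ hfa).exists_ne a
      exact ⟨a', hA _ hfa a' ha', hne, ha'.1⟩)
  exact hodd c hc heven

theorem exchangeProp_psi (hodd : ∀ ⦃v : V⦄ (c : G.Walk v v), c.IsCycle → ¬ Even c.length)
    (hmatch : ∀ S ∈ Psi G, ∃ f, IsMatchingInto G f (closedNbhd G S \ S) S) :
    ExchangeProp (Psi G) := by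
  intro X hX Y hY hcard
  obtain ⟨fX, hfX⟩ := hmatch X hX
  obtain ⟨fY, hfY⟩ := hmatch Y hY
  have hC : (X \ closedNbhd G Y).Nonempty := by
    have := hY.2 _ inter_subset_right (hX.1.mono inter_subset_left)
    have := card_sdiff_add_card_inter X (closedNbhd G Y)
    rw [← card_pos]
    omega
  obtain ⟨x, hx, hsub⟩ :=
    exists_neighborSet_sdiff_closedNbhd_subsingleton G hodd hX.1 hY.1 hfX hfY hC
  obtain ⟨hxX, hxY⟩ := mem_sdiff.1 hx
  obtain ⟨g, hg⟩ := hfY.exists_insert hxY hsub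
  exact ⟨x, hxX, fun h => hxY (subset_closedNbhd G Y h),
    mem_psi_of_isMatchingInto G (hY.1.insert hxY) hg⟩

/-- Two neighbours of `x` outside `N[S \ {x}]` would be non-adjacent (no triangles), so together
with `S \ {x}` they would form a stable subset of `N[S]` larger than `S`. -/
lemma neighborSet_sdiff_closedNbhd_erase_subsingleton (h3 : G.CliqueFree 3) {S : Finset V}
    (hS : S ∈ Psi G) {x : V} (hx : x ∈ S) :
    (G.neighborSet x \ ↑(closedNbhd G (S.erase x))).Subsingleton := by
  intro u hu v hv
  by_contra huv
  set S' := S.erase x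
  have hvS' : StableSet G (insert v S') := (hS.1.mono (erase_subset x S)).insert hv.2
  have hu' : u ∉ closedNbhd G (insert v S') := by
    rw [mem_closedNbhd_insert]
    rintro (h | h | h)
    exacts [huv h, h3 {x, u, v} (is3Clique_triple_iff.2 ⟨hu.1, hv.1, h⟩), hu.2 h]
  have hsub : insert u (insert v S') ⊆ closedNbhd G S := by
    intro t ht
    rcases mem_insert.1 ht with rfl | ht
    · exact mem_closedNbhd_of_adj G hx hu.1.symm
    rcases mem_insert.1 ht with rfl | ht
    · exact mem_closedNbhd_of_adj G hx hv.1.symm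
    · exact subset_closedNbhd G S (mem_of_mem_erase ht)
  have hcard : (insert u (insert v S')).card = S.card + 1 := by
    rw [card_insert_of_notMem fun h => hu' (subset_closedNbhd G _ h),
      card_insert_of_notMem fun h => hv.2 (subset_closedNbhd G _ h), card_erase_add_one hx]
  have := hS.2 _ hsub (hvS'.insert hu')
  omega

theorem exists_isMatchingInto_of_accessible_psi (h3 : G.CliqueFree 3)
    (hacc : Accessible (Psi G)) {S : Finset V} (hS : S ∈ Psi G) :
    ∃ f, IsMatchingInto G f (closedNbhd G S \ S) S := by
  induction S using Finset.strongInduction with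
  | H S ih =>
    rcases S.eq_empty_or_nonempty with rfl | hne
    · exact ⟨id, by simpa [closedNbhd_empty] using IsMatchingInto.of_empty⟩
    obtain ⟨x, hx, hS'⟩ := hacc S hS hne
    obtain ⟨f, hf⟩ := ih _ (erase_ssubset hx) hS'
    have hxN : x ∉ closedNbhd G (S.erase x) := by
      rw [mem_closedNbhd]
      rintro (h | ⟨s, hs, h⟩)
      exacts [notMem_erase x S h, hS.1 x hx s (mem_of_mem_erase hs) h]
    simpa [insert_erase hx] using
      hf.exists_insert hxN (neighborSet_sdiff_closedNbhd_erase_subsingleton G h3 hS hx)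

end Psi

theorem psi_odd_unicyclic_greedoid_iff_general [Fintype V] [DecidableEq V] (G : SimpleGraph V)
    [DecidableRel G.Adj] (q : ℕ) (hq : 2 ≤ q)
    (hlen : ∀ ⦃v : V⦄ (c : G.Walk v v), c.IsCycle → c.length = 2 * q + 1) :
    IsGreedoid (Psi G) ↔
      ∀ S ∈ Psi G, KonigEgervary (G.induce ↑(closedNbhd G S)) := by
  have hodd : ∀ ⦃v : V⦄ (c : G.Walk v v), c.IsCycle → ¬ Even c.length := fun v c hc => by
    rw [hlen c hc, Nat.not_even_iff_odd]
    exact odd_two_mul_add_one q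
  have h3 : G.CliqueFree 3 := fun s hs => by
    obtain ⟨v, c, hc, hc3⟩ := is3Clique_iff_exists_cycle_length_three.1 ⟨s, hs⟩
    have := hlen c hc
    omega
  constructor
  · rintro ⟨-, hacc, -⟩ S hS
    exact (konigEgervary_induce_closedNbhd_iff G hS).2
      (exists_isMatchingInto_of_accessible_psi G h3 hacc hS)
  · intro hKE
    have hmatch S (hS : S ∈ Psi G) := (konigEgervary_induce_closedNbhd_iff G hS).1 (hKE S hS)
    exact ⟨⟨∅, empty_mem_psi G⟩, accessible_psi G hodd hmatch, exchangeProp_psi G hodd hmatch⟩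

/-- For a unicycle graph whose unique cycle has odd length `2q+1 ≥ 5`, Ψ(G) is a
greedoid iff the closed neighborhood of every local maximum stable set induces a
König–Egerváry graph. -/
theorem psi_odd_unicyclic_greedoid_iff [Fintype V] [DecidableEq V] (G : SimpleGraph V)
    [DecidableRel G.Adj] (huni : Unicyclic G) (q : ℕ) (hq : 2 ≤ q)
    (hlen : ∀ ⦃v : V⦄ (c : G.Walk v v), c.IsCycle → c.length = 2 * q + 1) :
    IsGreedoid (Psi G) ↔
      ∀ S ∈ Psi G, KonigEgervary (G.induce ↑(closedNbhd G S)) :=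
  psi_odd_unicyclic_greedoid_iff_general G q hq hlen
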